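/- Let n ≥ 2 and suppose that there exist a strongly regular graph with parameters (4n−3, 2n−2, n−2, n−1) and a symmetric [α]-Hadamard matrix of order ζ ≥ 2 (with 0 ≤ α ≤ ζ). If ζ is even or ⌈(4(n−1)α+1)/ζ⌉ − 1 is even, then 4n−2 ≤ M_ζ(K_{2, (ζ+α)(n−1)+1}; 2) ≤ 4n−2 + ⌈(4(n−1)α+1)/ζ⌉. -/

import Mathlib

open Finset Matrix

/-- The complete multipartite graph `K_{c×s}` with `c` partite sets, each of size `s`,
on the vertex set `Fin c × Fin s`. -/
def multiK (c s : ℕ) : SimpleGraph (Fin c × Fin s) where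
  Adj v w := v.1 ≠ w.1
  symm := ⟨fun _ _ h => Ne.symm h⟩
  loopless := ⟨fun _ h => h rfl⟩

/-- The symmetric edge `k`-coloring `C` of the graph `G` contains a monochromatic copy of the
complete bipartite graph `K_{2,n}` in color `i`: there are two distinct vertices `a b` and a
set `S` of `n` further vertices all joined to both `a` and `b` by edges of color `i`. -/
def HasMonoK2 {V : Type*} (G : SimpleGraph V) {k : ℕ}
    (C : V → V → Fin k) (i : Fin k) (n : ℕ) : Prop :=
  ∃ (a b : V) (S : Finset V), a ≠ b ∧ a ∉ S ∧ b ∉ S ∧ S.card = n ∧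
    ∀ v ∈ S, G.Adj a v ∧ G.Adj b v ∧ C a v = i ∧ C b v = i

/-- Every symmetric `k`-coloring of the edges of `K_{c×s}` contains a monochromatic copy of
`K_{2, ns i}` in some color `i`. -/
def ArrowsVec (c s k : ℕ) (ns : Fin k → ℕ) : Prop :=
  ∀ C : (Fin c × Fin s) → (Fin c × Fin s) → Fin k,
    (∀ v w, C v w = C w v) → ∃ i : Fin k, HasMonoK2 (multiK c s) C i (ns i)

/-- Every symmetric `k`-coloring of the edges of `K_{c×s}` contains a monochromatic `K_{2,n}`. -/
def Arrows (c s n k : ℕ) : Prop := ArrowsVec c s k (fun _ => n)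

/-- The set multipartite Ramsey number `M_s(K_{2,n}; k)`: the smallest positive integer `c` such
that every `k`-coloring of the edges of `K_{c×s}` contains a monochromatic `K_{2,n}`. -/
noncomputable def setRamsey (s n k : ℕ) : ℕ := sInf {c : ℕ | 0 < c ∧ Arrows c s n k}

/-- The size multipartite Ramsey number `m_c(K_{2,n}; k)`: the smallest positive integer `s` such
that every `k`-coloring of the edges of `K_{c×s}` contains a monochromatic `K_{2,n}`. -/
noncomputable def sizeRamsey (c n k : ℕ) : ℕ := sInf {s : ℕ | 0 < s ∧ Arrows c s n k}

/-- The size multipartite Ramsey number `m_c(K_{2,n₁},…,K_{2,n_k})`. -/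
noncomputable def sizeRamseyVec (c k : ℕ) (ns : Fin k → ℕ) : ℕ :=
  sInf {s : ℕ | 0 < s ∧ ArrowsVec c s k ns}

/-- All entries of the matrix `H` are `1` or `-1`. -/
def PMOne {ι : Type*} (H : Matrix ι ι ℤ) : Prop := ∀ i j, H i j = 1 ∨ H i j = -1

/-- `H` is an `[α]`-Hadamard matrix: a square `±1` matrix such that `α` is an upper bound for
`|(H * Hᵀ) i j|` over all pairs `i ≠ j`. -/
def IsBHadamard {ι : Type*} [Fintype ι] (α : ℕ) (H : Matrix ι ι ℤ) : Prop :=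
  PMOne H ∧ ∀ i j, i ≠ j → |(H * Hᵀ) i j| ≤ (α : ℤ)

/-- `H` is an `α`-Hadamard matrix: a square `±1` matrix such that `α` is the maximum of
`|(H * Hᵀ) i j|` over all pairs `i ≠ j`. -/
def IsEHadamard {ι : Type*} [Fintype ι] (α : ℕ) (H : Matrix ι ι ℤ) : Prop :=
  IsBHadamard α H ∧ ∃ i j, i ≠ j ∧ |(H * Hᵀ) i j| = (α : ℤ)

/-- `H` is a Hadamard matrix: a square `±1` matrix with `H * Hᵀ = ζ • 1`. -/
def IsHadamard {ι : Type*} [Fintype ι] [DecidableEq ι] (H : Matrix ι ι ℤ) : Prop :=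
  PMOne H ∧ H * Hᵀ = (Fintype.card ι : ℤ) • (1 : Matrix ι ι ℤ)

/-!
Upper bound: if a symmetric 2-colouring of `K_{c×ζ}` has no monochromatic `K_{2,N+1}`, two vertices
have at most `N` common neighbours of either colour, so counting monochromatic paths of length two
gives `∑ᵥ (d₀ v ^ 2 + d₁ v ^ 2) ≤ cζ (d + 2 (cζ - 1) N)`, whereas `d₀ v + d₁ v = d = (c - 1) ζ`
forces the left side to be at least `cζ d² / 2`. For `c = 4n - 2 + ⌈(4(n-1)α+1)/ζ⌉` and
`N = (ζ + α)(n - 1)` the two bounds are incompatible.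

Lower bound: for `c ≤ 4n - 3` send the parts injectively to the vertices of the strongly regular
graph `G` and give the edge `(u, p)(w, k)` colour `0` exactly when `u, w` are adjacent in `G` iff
`H p k = 1`. Two vertices `(u, p), (u, r)` of one part then have `(2n - 2) · #{k | H p k = H r k}
≤ (n - 1)(ζ + α)` common neighbours of a given colour. For vertices in different parts each `k`
contributes at most `n - 1`, because in an SRG with parameters `(4n-3, 2n-2, n-2, n-1)` each of
the four adjacency patterns towards two distinct vertices occurs at most `n - 1` times.
-/

theorem sum_sum_card_filter_and_eq {α β : Type*} [Fintype α] [Fintype β] (r : α → β → Prop)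
    [∀ a, DecidablePred (r a)] :
    ∑ a, ∑ b, #{v | r a v ∧ r b v} = ∑ v, #{a | r a v} ^ 2 := by
  simp only [card_filter, sq, sum_mul_sum, ite_zero_mul_ite_zero, mul_one]
  exact (sum_congr rfl fun _ _ => sum_comm).trans sum_comm

theorem card_filter_prod_eq_sum {α β : Type*} [Fintype α] [Fintype β] (P : α × β → Prop)
    [DecidablePred P] : #{x | P x} = ∑ b, #{a | P (a, b)} := by
  simp only [card_filter]
  exact Fintype.sum_prod_type_right _

def colorNeighborFinset {V : Type*} [Fintype V] (G : SimpleGraph V) [DecidableRel G.Adj] {k : ℕ}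
    (C : V → V → Fin k) (i : Fin k) (v : V) : Finset V :=
  {w | G.Adj v w ∧ C v w = i}

section ColorNeighborhoods

variable {V : Type*} [Fintype V] [DecidableEq V] {G : SimpleGraph V} [DecidableRel G.Adj]

theorem hasMonoK2_iff {k : ℕ} {C : V → V → Fin k} {i : Fin k} {m : ℕ} :
    HasMonoK2 G C i m ↔
      ∃ a b, a ≠ b ∧ m ≤ #(colorNeighborFinset G C i a ∩ colorNeighborFinset G C i b) := by
  simp only [colorNeighborFinset, ← filter_and]
  constructor
  · rintro ⟨a, b, S, hab, -, -, rfl, hS⟩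
    refine ⟨a, b, hab, card_le_card fun v hv => ?_⟩
    obtain ⟨ha, hb, hCa, hCb⟩ := hS v hv
    exact mem_filter.2 ⟨mem_univ v, ⟨ha, hCa⟩, hb, hCb⟩
  · rintro ⟨a, b, hab, hm⟩
    obtain ⟨S, hS, rfl⟩ := exists_subset_card_eq hm
    have hmem (v) (hv : v ∈ S) : (G.Adj a v ∧ C a v = i) ∧ G.Adj b v ∧ C b v = i :=
      (mem_filter.1 (hS hv)).2
    exact ⟨a, b, S, hab, fun ha => G.loopless.irrefl a (hmem a ha).1.1,
      fun hb => G.loopless.irrefl b (hmem b hb).2.1, rfl,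
      fun v hv => ⟨(hmem v hv).1.1, (hmem v hv).2.1, (hmem v hv).1.2, (hmem v hv).2.2⟩⟩

theorem sum_sq_card_colorNeighborFinset_le {k : ℕ} {C : V → V → Fin k}
    (hC : ∀ v w, C v w = C w v) {i : Fin k} {N : ℕ} (h : ¬ HasMonoK2 G C i (N + 1)) :
    ∑ v, #(colorNeighborFinset G C i v) ^ 2
      ≤ ∑ v, #(colorNeighborFinset G C i v) + Fintype.card V * ((Fintype.card V - 1) * N) := by
  have hsymm (v : V) : #{a | G.Adj a v ∧ C a v = i} = #(colorNeighborFinset G C i v) := by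
    simp only [colorNeighborFinset, G.adj_comm, hC]
  calc ∑ v, #(colorNeighborFinset G C i v) ^ 2
      = ∑ a, ∑ b, #(colorNeighborFinset G C i a ∩ colorNeighborFinset G C i b) := by
        rw [sum_congr rfl fun v _ => by rw [← hsymm], ← sum_sum_card_filter_and_eq]
        simp only [colorNeighborFinset, filter_and]
    _ ≤ ∑ a, (#(colorNeighborFinset G C i a) + (Fintype.card V - 1) * N) := by
        refine sum_le_sum fun a _ => ?_
        rw [← sum_erase_add _ _ (mem_univ a), inter_self, add_comm]
        gcongr
        calc _ ≤ ∑ _b ∈ univ.erase a, N := sum_le_sum fun b hb => Nat.le_of_lt_succ <|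
                not_le.1 fun hN => h (hasMonoK2_iff.2 ⟨a, b, (ne_of_mem_erase hb).symm, hN⟩)
          _ = _ := by simp [card_erase_of_mem]
    _ = _ := by simp [sum_add_distrib]

theorem card_colorNeighborFinset_zero_add_card_colorNeighborFinset_one (C : V → V → Fin 2)
    (v : V) : #(colorNeighborFinset G C 0 v) + #(colorNeighborFinset G C 1 v) = G.degree v := by
  rw [← card_union_of_disjoint, ← G.card_neighborFinset_eq_degree]
  · congr 1
    ext w
    simp only [colorNeighborFinset, mem_union, mem_filter, mem_univ, true_and,
      SimpleGraph.mem_neighborFinset]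
    have : C v w = 0 ∨ C v w = 1 := by omega
    tauto
  · refine disjoint_filter.2 fun w _ h0 h1 => ?_
    simp [h0.2] at h1

theorem exists_hasMonoK2_of_isRegularOfDegree [Nonempty V] {d N : ℕ}
    (hG : G.IsRegularOfDegree d) {C : V → V → Fin 2} (hC : ∀ v w, C v w = C w v)
    (h : 4 * N * (Fintype.card V - 1) + 2 * d < d ^ 2) :
    ∃ i, HasMonoK2 G C i (N + 1) := by
  by_contra! hno
  set d₀ := fun v => #(colorNeighborFinset G C 0 v)
  set d₁ := fun v => #(colorNeighborFinset G C 1 v)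
  have hdeg (v : V) : d₀ v + d₁ v = d := by
    rw [card_colorNeighborFinset_zero_add_card_colorNeighborFinset_one, hG v]
  have hconv : Fintype.card V * d ^ 2 ≤ 2 * (∑ v, d₀ v ^ 2 + ∑ v, d₁ v ^ 2) := by
    rw [← sum_add_distrib, mul_sum, ← smul_eq_mul, ← card_univ, ← sum_const]
    refine sum_le_sum fun v _ => ?_
    rw [← hdeg v]
    nlinarith [sq_nonneg ((d₀ v : ℤ) - d₁ v)]
  have hsum : ∑ v, d₀ v + ∑ v, d₁ v = Fintype.card V * d := by
    rw [← sum_add_distrib, sum_congr rfl fun v _ => hdeg v, sum_const, card_univ, smul_eq_mul]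
  have : Fintype.card V * d ^ 2 ≤ Fintype.card V * (4 * N * (Fintype.card V - 1) + 2 * d) := by
    nlinarith [sum_sq_card_colorNeighborFinset_le hC (hno 0),
      sum_sq_card_colorNeighborFinset_le hC (hno 1)]
  have := Nat.le_of_mul_le_mul_left this Fintype.card_pos
  omega

end ColorNeighborhoods

instance (c s : ℕ) : DecidableRel (multiK c s).Adj :=
  fun v w => inferInstanceAs (Decidable (v.1 ≠ w.1))

theorem multiK_isRegularOfDegree (c s : ℕ) :
    (multiK c s).IsRegularOfDegree ((c - 1) * s) := by
  intro v
  rw [← SimpleGraph.card_neighborFinset_eq_degree,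
    show (multiK c s).neighborFinset v = {v.1}ᶜ ×ˢ univ by
      ext; simp only [SimpleGraph.mem_neighborFinset]; simp [multiK, eq_comm]]
  simp [card_compl]

theorem arrows_of_lt {c s N : ℕ} (hc : 0 < c) (hs : 0 < s)
    (h : 4 * N * (c * s - 1) + 2 * ((c - 1) * s) < ((c - 1) * s) ^ 2) : Arrows c s (N + 1) 2 :=
  fun _ hC =>
    have : Nonempty (Fin c × Fin s) := ⟨(⟨0, hc⟩, ⟨0, hs⟩)⟩
    exists_hasMonoK2_of_isRegularOfDegree (multiK_isRegularOfDegree c s) hC (by simpa using h)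

namespace SimpleGraph

variable {V : Type*} [Fintype V] [DecidableEq V]

def adjClass (G : SimpleGraph V) [DecidableRel G.Adj] (x y : V) (s t : Bool) : Finset V :=
  {w | w ≠ x ∧ w ≠ y ∧ decide (G.Adj x w) = s ∧ decide (G.Adj y w) = t}

variable {G : SimpleGraph V} [DecidableRel G.Adj]

theorem adjClass_comm (x y : V) (s t : Bool) : G.adjClass x y s t = G.adjClass y x t s := by
  ext w
  simp only [adjClass, mem_filter, mem_univ, true_and]
  tauto

theorem card_adjClass_add_card_adjClass (x y : V) (s : Bool) :
    #(G.adjClass x y s true) + #(G.adjClass x y s false)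
      = #{w | w ≠ x ∧ w ≠ y ∧ decide (G.Adj x w) = s} := by
  rw [← card_union_of_disjoint]
  · congr 1
    ext w
    simp only [adjClass, mem_union, mem_filter, mem_univ, true_and]
    cases decide (G.Adj y w) <;> simp
  · refine disjoint_filter.2 fun w _ h1 h2 => ?_
    simp [h1.2.2.2] at h2

theorem card_filter_adj_add_card_filter_not_adj (x y : V) :
    #{w | w ≠ x ∧ w ≠ y ∧ decide (G.Adj x w) = true}
      + #{w | w ≠ x ∧ w ≠ y ∧ decide (G.Adj x w) = false} = #({x, y}ᶜ : Finset V) := by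
  rw [← card_union_of_disjoint]
  · congr 1
    ext w
    simp only [mem_union, mem_filter, mem_univ, true_and, mem_compl, mem_insert, mem_singleton]
    cases decide (G.Adj x w) <;> simp
  · refine disjoint_filter.2 fun w _ h1 h2 => ?_
    simp [h1.2.2] at h2

theorem card_filter_adj (x y : V) :
    #{w | w ≠ x ∧ w ≠ y ∧ decide (G.Adj x w) = true}
      = if G.Adj x y then G.degree x - 1 else G.degree x := by
  have : ({w | w ≠ x ∧ w ≠ y ∧ decide (G.Adj x w) = true} : Finset V)
      = (G.neighborFinset x).erase y := by
    ext w
    simp only [mem_filter, mem_univ, true_and, decide_eq_true_eq, mem_erase, mem_neighborFinset]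
    exact ⟨fun h => ⟨h.2.1, h.2.2⟩, fun h => ⟨(G.ne_of_adj h.2).symm, h⟩⟩
  simp only [this, card_erase_eq_ite, card_neighborFinset_eq_degree, mem_neighborFinset]

theorem card_adjClass_self {d : ℕ} (hG : G.IsRegularOfDegree d)
    (hV : Fintype.card V = 2 * d + 1) (x : V) (s t : Bool) :
    #(G.adjClass x x s t) = if s = t then d else 0 := by
  have hmixed (s t : Bool) (hst : s ≠ t) : #(G.adjClass x x s t) = 0 := by
    refine card_eq_zero.2 (filter_eq_empty_iff.2 fun w _ h => hst ?_)
    rw [← h.2.2.1, h.2.2.2]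
  obtain ⟨hxF, hxT⟩ := Bool.forall_bool.1 (card_adjClass_add_card_adjClass (G := G) x x)
  have hx := card_filter_adj_add_card_filter_not_adj (G := G) x x
  simp only [card_filter_adj, G.irrefl, if_false, hG x, card_compl, pair_eq_singleton,
    card_singleton, hV] at hxF hxT hx
  split_ifs with hst
  · have := hmixed true false (by decide)
    have := hmixed false true (by decide)
    subst hst
    cases s <;> omega
  · exact hmixed s t hst

theorem IsSRGWith.card_adjClass_le {n : ℕ}
    (hG : G.IsSRGWith (4 * n - 3) (2 * n - 2) (n - 2) (n - 1)) {x y : V} (hxy : x ≠ y)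
    (s t : Bool) : #(G.adjClass x y s t) ≤ n - 1 := by
  have hTT : #(G.adjClass x y true true) = if G.Adj x y then n - 2 else n - 1 := by
    have : #(G.adjClass x y true true) = Fintype.card (G.commonNeighbors x y) := by
      rw [← Set.toFinset_card]
      congr 1
      ext w
      simp only [adjClass, mem_filter, mem_univ, true_and, decide_eq_true_eq, Set.mem_toFinset,
        mem_commonNeighbors]
      exact ⟨fun h => h.2.2, fun h => ⟨(G.ne_of_adj h.1).symm, (G.ne_of_adj h.2).symm, h⟩⟩
    split_ifs with h
    exacts [this.trans (hG.of_adj x y h), this.trans (hG.of_not_adj hxy h)]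
  have hcard : 2 ≤ Fintype.card V := Fintype.one_lt_card_iff.2 ⟨x, y, hxy⟩
  obtain ⟨hxF, hxT⟩ := Bool.forall_bool.1 (card_adjClass_add_card_adjClass (G := G) x y)
  obtain ⟨hyF, hyT⟩ := Bool.forall_bool.1 (card_adjClass_add_card_adjClass (G := G) y x)
  have hx := card_filter_adj_add_card_filter_not_adj (G := G) x y
  have hy := card_filter_adj_add_card_filter_not_adj (G := G) y x
  simp only [adjClass_comm y x, card_filter_adj, hG.regular x, hG.regular y, G.adj_comm y x,
    hG.card, card_compl, card_pair hxy, card_pair hxy.symm] at hxF hxT hyF hyT hx hy hcard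
  split_ifs at * <;> cases s <;> cases t <;> omega

end SimpleGraph

theorem two_mul_card_filter_eq_eq_card_add_sum_mul {ι : Type*} [Fintype ι] {a b : ι → ℤ}
    (ha : ∀ k, a k = 1 ∨ a k = -1) (hb : ∀ k, b k = 1 ∨ b k = -1) :
    2 * (#{k | a k = b k} : ℤ) = Fintype.card ι + ∑ k, a k * b k := by
  have hab (k : ι) : a k * b k = 2 * (if a k = b k then 1 else 0) - 1 := by
    rcases ha k with h | h <;> rcases hb k with h' | h' <;> simp [h, h']
  simp only [hab, sum_sub_distrib, ← mul_sum, sum_boole, sum_const, card_univ, nsmul_eq_mul]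
  ring

theorem IsBHadamard.two_mul_card_filter_eq_le {ζ α : ℕ} {H : Matrix (Fin ζ) (Fin ζ) ℤ}
    (hH : IsBHadamard α H) {p r : Fin ζ} (hpr : p ≠ r) :
    2 * #{k | H p k = H r k} ≤ ζ + α := by
  have h := two_mul_card_filter_eq_eq_card_add_sum_mul (hH.1 p) (hH.1 r)
  have hpr := (le_abs_self _).trans (hH.2 p r hpr)
  simp only [mul_apply, transpose_apply, Fintype.card_fin] at h hpr
  omega

def productColoring {V : Type*} (G : SimpleGraph V) [DecidableRel G.Adj] {c ζ : ℕ}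
    (f : Fin c → V) (H : Matrix (Fin ζ) (Fin ζ) ℤ) (x y : Fin c × Fin ζ) : Fin 2 :=
  if decide (G.Adj (f x.1) (f y.1)) = decide (H x.2 y.2 = 1) then 0 else 1

section ProductColoring

variable {V : Type*} {G : SimpleGraph V} [DecidableRel G.Adj] {c ζ : ℕ} {f : Fin c → V}
  {H : Matrix (Fin ζ) (Fin ζ) ℤ}

theorem productColoring_comm (hH : H.IsSymm) (x y : Fin c × Fin ζ) :
    productColoring G f H x y = productColoring G f H y x := by
  simp only [productColoring, G.adj_comm (f x.1), hH.apply x.2 y.2]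

theorem productColoring_eq_iff (x y : Fin c × Fin ζ) (i : Fin 2) :
    productColoring G f H x y = i ↔
      decide (G.Adj (f x.1) (f y.1)) = decide (H x.2 y.2 = 1 ↔ i = 0) := by
  unfold productColoring
  by_cases hG : G.Adj (f x.1) (f y.1) <;> by_cases hH : H x.2 y.2 = 1 <;> fin_cases i <;>
    simp [hG, hH]

variable [Fintype V] [DecidableEq V]

theorem card_productColoring_inter_le_sum_card_adjClass (hf : f.Injective) (i : Fin 2)
    (u v : Fin c) (p r : Fin ζ) :
    #(colorNeighborFinset (multiK c ζ) (productColoring G f H) i (u, p)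
        ∩ colorNeighborFinset (multiK c ζ) (productColoring G f H) i (v, r))
      ≤ ∑ k, #(G.adjClass (f u) (f v) (decide (H p k = 1 ↔ i = 0))
          (decide (H r k = 1 ↔ i = 0))) := by
  rw [colorNeighborFinset, colorNeighborFinset, ← filter_and, card_filter_prod_eq_sum]
  refine sum_le_sum fun k _ => card_le_card_of_injOn f (fun w hw => ?_) hf.injOn
  simp only [coe_filter, mem_univ, true_and, Set.mem_ofPred_eq, productColoring_eq_iff] at hw
  simp only [SimpleGraph.adjClass, coe_filter, mem_univ, true_and, Set.mem_ofPred_eq]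
  obtain ⟨⟨hu, hsu⟩, hv, hsv⟩ := hw
  exact ⟨fun h => hu (hf h).symm, fun h => hv (hf h).symm, hsu, hsv⟩

theorem card_productColoring_inter_le {n α : ℕ}
    (hG : G.IsSRGWith (4 * n - 3) (2 * n - 2) (n - 2) (n - 1)) (hf : f.Injective)
    (hH : IsBHadamard α H) {a b : Fin c × Fin ζ} (hab : a ≠ b) (i : Fin 2) :
    #(colorNeighborFinset (multiK c ζ) (productColoring G f H) i a
        ∩ colorNeighborFinset (multiK c ζ) (productColoring G f H) i b) ≤ (ζ + α) * (n - 1) := by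
  obtain ⟨u, p⟩ := a
  obtain ⟨v, r⟩ := b
  refine (card_productColoring_inter_le_sum_card_adjClass hf i u v p r).trans ?_
  by_cases huv : u = v
  · subst huv
    have hpr : p ≠ r := fun h => hab (h ▸ rfl)
    have hV : Fintype.card V = 2 * (2 * n - 2) + 1 := by
      have := Fintype.card_pos_iff.2 ⟨f u⟩
      rw [hG.card] at this ⊢
      omega
    have hsign (k : Fin ζ) :
        decide (H p k = 1 ↔ i = 0) = decide (H r k = 1 ↔ i = 0) ↔ H p k = H r k := by
      rcases hH.1 p k with h | h <;> rcases hH.1 r k with h' | h' <;> simp [h, h']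
    simp only [SimpleGraph.card_adjClass_self hG.regular hV, hsign, sum_ite, sum_const_zero,
      add_zero, sum_const, smul_eq_mul]
    calc #{k | H p k = H r k} * (2 * n - 2) = 2 * #{k | H p k = H r k} * (n - 1) := by
          rw [show 2 * n - 2 = 2 * (n - 1) by omega]; ring
      _ ≤ (ζ + α) * (n - 1) := Nat.mul_le_mul_right _ (hH.two_mul_card_filter_eq_le hpr)
  · calc _ ≤ ∑ _k : Fin ζ, (n - 1) :=
          sum_le_sum fun k _ => hG.card_adjClass_le (hf.ne huv) _ _
      _ = ζ * (n - 1) := by simp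
      _ ≤ (ζ + α) * (n - 1) := by gcongr; omega

end ProductColoring

theorem not_arrows_of_isSRGWith {V : Type*} [Fintype V] {G : SimpleGraph V} [DecidableRel G.Adj]
    {n ζ α c : ℕ} (hG : G.IsSRGWith (4 * n - 3) (2 * n - 2) (n - 2) (n - 1))
    {H : Matrix (Fin ζ) (Fin ζ) ℤ} (hHs : H.IsSymm) (hH : IsBHadamard α H) (hc : c ≤ 4 * n - 3) :
    ¬ Arrows c ζ ((ζ + α) * (n - 1) + 1) 2 := by
  classical
  obtain ⟨f⟩ : Nonempty (Fin c ↪ V) :=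
    Function.Embedding.nonempty_of_card_le (by simpa [hG.card] using hc)
  intro hA
  obtain ⟨i, hi⟩ := hA (productColoring G f H) (productColoring_comm hHs)
  obtain ⟨a, b, hab, hlt⟩ := hasMonoK2_iff.1 hi
  exact (card_productColoring_inter_le hG f.injective hH hab i).not_gt hlt

theorem setRamsey_le {s n k c : ℕ} (hc : 0 < c) (h : Arrows c s n k) : setRamsey s n k ≤ c :=
  Nat.sInf_le ⟨hc, h⟩

theorem le_setRamsey {s n k c m : ℕ} (hc : 0 < c) (h : Arrows c s n k)
    (hm : ∀ c' < m, ¬ Arrows c' s n k) : m ≤ setRamsey s n k :=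
  le_csInf ⟨c, hc, h⟩ fun _ hb => not_lt.1 fun hlt => hm _ hlt hb.2

theorem exists_natCast_eq_ceil_div (a : ℕ) {b : ℕ} (hb : 0 < b) :
    ∃ q : ℕ, (q : ℤ) = ⌈(a : ℚ) / b⌉ ∧ a ≤ b * q := by
  refine ⟨⌈(a : ℚ) / b⌉₊, Int.natCast_ceil_eq_ceil (by positivity), ?_⟩
  have := Nat.le_ceil ((a : ℚ) / b)
  rw [div_le_iff₀ (by positivity)] at this
  exact_mod_cast (by linarith : (a : ℚ) ≤ b * ⌈(a : ℚ) / b⌉₊)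

theorem four_mul_mul_add_lt_sq {M ζ α q : ℕ} (hζ : 2 ≤ ζ) (hq : 4 * M * α + 1 ≤ ζ * q) :
    4 * ((ζ + α) * M) * ((4 * M + 2 + q) * ζ - 1) + 2 * ((4 * M + 1 + q) * ζ)
      < ((4 * M + 1 + q) * ζ) ^ 2 := by
  obtain ⟨e, he⟩ := Nat.exists_eq_add_of_le hq
  have h1 : 1 ≤ (4 * M + 2 + q) * ζ := by nlinarith
  zify [h1] at he ⊢
  -- with `ζ q = 4Mα + 1 + e`, right side minus left side is `ζ (4M + 1 + q) e + (ζ - 1)(ζ + 1 + e)`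
  nlinarith [mul_nonneg (mul_nonneg (Int.natCast_nonneg ζ) (Int.natCast_nonneg (4 * M + 1 + q)))
    (Int.natCast_nonneg e), mul_nonneg (by omega : (0 : ℤ) ≤ ζ - 1) (Int.natCast_nonneg e)]

theorem statement16_general (n ζ α : ℕ) (hn : 2 ≤ n) (hζ : 2 ≤ ζ)
    (hSRG : ∃ (V : Type) (_ : Fintype V) (G : SimpleGraph V) (_ : DecidableRel G.Adj),
      G.IsSRGWith (4 * n - 3) (2 * n - 2) (n - 2) (n - 1))
    (hHad : ∃ H : Matrix (Fin ζ) (Fin ζ) ℤ, H.IsSymm ∧ IsBHadamard α H) :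
    4 * n - 2 ≤ setRamsey ζ ((ζ + α) * (n - 1) + 1) 2 ∧
    (setRamsey ζ ((ζ + α) * (n - 1) + 1) 2 : ℤ) ≤
      4 * (n : ℤ) - 2 + ⌈(4 * ((n : ℚ) - 1) * α + 1) / (ζ : ℚ)⌉ := by
  obtain ⟨V, _, G, _, hG⟩ := hSRG
  obtain ⟨H, hHs, hH⟩ := hHad
  obtain ⟨q, hqQ, hq⟩ := exists_natCast_eq_ceil_div (4 * (n - 1) * α + 1) (by omega : 0 < ζ)
  have hceil : ⌈(4 * ((n : ℚ) - 1) * α + 1) / (ζ : ℚ)⌉ = q := by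
    rw [hqQ]
    push_cast [Nat.cast_sub (by omega : 1 ≤ n)]
    rfl
  have harr : Arrows (4 * n - 2 + q) ζ ((ζ + α) * (n - 1) + 1) 2 := by
    refine arrows_of_lt (by omega) (by omega) ?_
    rw [show 4 * n - 2 + q = 4 * (n - 1) + 2 + q by omega,
      show 4 * (n - 1) + 2 + q - 1 = 4 * (n - 1) + 1 + q by omega]
    exact four_mul_mul_add_lt_sq hζ hq
  refine ⟨le_setRamsey (by omega) harr fun c hc => not_arrows_of_isSRGWith hG hHs hH (by omega),
    ?_⟩
  rw [hceil]
  have := setRamsey_le (by omega) harr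
  omega

/-- **Example (bounds from an SRG with parameters `(4n-3, 2n-2, n-2, n-1)`).**
Let `n ≥ 2`. Suppose there exist a strongly regular graph with parameters
`(4n-3, 2n-2, n-2, n-1)` and a symmetric `[α]`-Hadamard matrix of order `ζ ≥ 2` (with `α ≤ ζ`).
If `ζ` is even or `⌈(4(n-1)α+1)/ζ⌉ - 1` is even, then
`4n-2 ≤ M_ζ(K_{2, (ζ+α)(n-1)+1}; 2) ≤ 4n-2 + ⌈(4(n-1)α+1)/ζ⌉`. -/
theorem statement16 (n ζ α : ℕ) (hn : 2 ≤ n) (hζ : 2 ≤ ζ) (hα : α ≤ ζ)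
    (hSRG : ∃ (V : Type) (_ : Fintype V) (G : SimpleGraph V) (_ : DecidableRel G.Adj),
      G.IsSRGWith (4 * n - 3) (2 * n - 2) (n - 2) (n - 1))
    (hHad : ∃ H : Matrix (Fin ζ) (Fin ζ) ℤ, H.IsSymm ∧ IsBHadamard α H)
    (hpar : Even ζ ∨ Even (⌈(4 * ((n : ℚ) - 1) * α + 1) / (ζ : ℚ)⌉ - 1)) :
    4 * n - 2 ≤ setRamsey ζ ((ζ + α) * (n - 1) + 1) 2 ∧
    (setRamsey ζ ((ζ + α) * (n - 1) + 1) 2 : ℤ) ≤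
      4 * (n : ℤ) - 2 + ⌈(4 * ((n : ℚ) - 1) * α + 1) / (ζ : ℚ)⌉ :=
  statement16_general n ζ α hn hζ hSRG hHad
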